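/- Let J be symmetric 3×3, Ĵ = (1/2)tr(J)I - J, ω ∈ R^3, Ω = ω^×, Π = ĴΩ + ΩĴ, and h > 0. Then Π + (h/2)[Ω,Π] - (h²/4) Ω Π Ω = ( Jω + (h/2)(ω × Jω) + (h²/4)(‖ω‖² Jω + ω × (ω × Jω)) )^×. -/

import Mathlib

open Matrix

def hat (w : Fin 3 → ℝ) : Matrix (Fin 3) (Fin 3) ℝ :=
  !![0, -w 2, w 1; w 2, 0, -w 0; -w 1, w 0, 0]

noncomputable def enorm3 (w : Fin 3 → ℝ) : ℝ := Real.sqrt (w ⬝ᵥ w)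

/-!
The momentum `Π = ĴΩ + ΩĴ` is itself a hat matrix, namely `(Jω)^×`. Both correction terms are
then products of hat matrices: the commutator `[a^×, b^×]` is `(a × b)^×`, and the sandwich
`a^× b^× a^×` is `-(‖a‖² b + a × (a × b))^×`. Since `hat` is linear, the left-hand side collapses
to the hat of the stated vector.
-/

lemma hat_add (a b : Fin 3 → ℝ) : hat (a + b) = hat a + hat b := by
  ext i j
  fin_cases i <;> fin_cases j <;> simp [hat] <;> ring

lemma hat_smul (c : ℝ) (a : Fin 3 → ℝ) : hat (c • a) = c • hat a := by
  ext i j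
  fin_cases i <;> fin_cases j <;> simp [hat]

lemma hat_mul_sub_hat_mul (a b : Fin 3 → ℝ) :
    hat a * hat b - hat b * hat a = hat (a ⨯₃ b) := by
  ext i j
  fin_cases i <;> fin_cases j <;> simp [hat, cross_apply] <;> ring

lemma hat_mul_hat_mul_hat (a b : Fin 3 → ℝ) :
    hat a * hat b * hat a = -hat ((a ⬝ᵥ a) • b + a ⨯₃ (a ⨯₃ b)) := by
  ext i j
  fin_cases i <;> fin_cases j <;>
    simp [hat, cross_apply, Matrix.mul_apply, dotProduct, Fin.sum_univ_three] <;> ring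

lemma mul_hat_add_hat_mul_of_transpose_eq {J : Matrix (Fin 3) (Fin 3) ℝ} (hJ : Jᵀ = J)
    (ω : Fin 3 → ℝ) : J * hat ω + hat ω * J = J.trace • hat ω - hat (J *ᵥ ω) := by
  have hsymm (i j : Fin 3) : J i j = J j i := by rw [← transpose_apply J j i, hJ]
  ext i j
  fin_cases i <;> fin_cases j <;>
    simp [hat, Matrix.mul_apply, Matrix.mulVec, Matrix.vecMul, dotProduct, Fin.sum_univ_three,
      Matrix.trace_fin_three, hsymm 1 0, hsymm 2 0, hsymm 2 1] <;> ring

lemma hat_mulVec_of_transpose_eq {J : Matrix (Fin 3) (Fin 3) ℝ} (hJ : Jᵀ = J) (ω : Fin 3 → ℝ) :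
    ((1 / 2 * J.trace) • 1 - J) * hat ω + hat ω * ((1 / 2 * J.trace) • 1 - J) =
      hat (J *ᵥ ω) := by
  have hsum := mul_hat_add_hat_mul_of_transpose_eq hJ ω
  rw [sub_mul, mul_sub, smul_mul_assoc, mul_smul_comm, one_mul, mul_one]
  linear_combination (norm := module) -hsum

lemma enorm3_sq (w : Fin 3 → ℝ) : enorm3 w ^ 2 = w ⬝ᵥ w :=
  Real.sq_sqrt (dotProduct_self_star_nonneg w)

theorem cayley_momentum_vectorization_general (J : Matrix (Fin 3) (Fin 3) ℝ) (hJ : Jᵀ = J)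
    (ω : Fin 3 → ℝ) (h : ℝ) :
    let Jhat : Matrix (Fin 3) (Fin 3) ℝ := (1 / 2 * J.trace) • 1 - J
    let Ω := hat ω
    let Pi := Jhat * Ω + Ω * Jhat
    Pi + (h / 2) • (Ω * Pi - Pi * Ω) - (h ^ 2 / 4) • (Ω * Pi * Ω) =
      hat (J.mulVec ω + (h / 2) • (ω ⨯₃ J.mulVec ω)
        + (h ^ 2 / 4) • ((enorm3 ω) ^ 2 • J.mulVec ω + ω ⨯₃ (ω ⨯₃ J.mulVec ω))) := by
  intro Jhat Ω Pi
  have hPi : Pi = hat (J *ᵥ ω) := hat_mulVec_of_transpose_eq hJ ω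
  rw [hPi, hat_mul_sub_hat_mul, hat_mul_hat_mul_hat, enorm3_sq]
  simp only [hat_add, hat_smul]
  module

theorem cayley_momentum_vectorization (J : Matrix (Fin 3) (Fin 3) ℝ) (hJ : Jᵀ = J)
    (ω : Fin 3 → ℝ) (h : ℝ) (hh : 0 < h) :
    let Jhat : Matrix (Fin 3) (Fin 3) ℝ := (1 / 2 * J.trace) • 1 - J
    let Ω := hat ω
    let Pi := Jhat * Ω + Ω * Jhat
    Pi + (h / 2) • (Ω * Pi - Pi * Ω) - (h ^ 2 / 4) • (Ω * Pi * Ω) =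
      hat (J.mulVec ω + (h / 2) • (ω ⨯₃ J.mulVec ω)
        + (h ^ 2 / 4) • ((enorm3 ω) ^ 2 • J.mulVec ω + ω ⨯₃ (ω ⨯₃ J.mulVec ω))) :=
  cayley_momentum_vectorization_general J hJ ω h
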